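/- Kraft inequality for the trimmed code: Σ_{i=1}^L 2^{−|λ^tr(m_i)|} ≤ 1. -/

import Mathlib

open Finset

/-
Each codeword of `λ^tr` is one bit longer than either `λ(m_i)` or a `⌈log₂ L⌉`-bit block, so
its Kraft weight is at most the average of `2^{-|λ(m_i)|}` and `2^{-⌈log₂ L⌉}`. Summing, the
first halves contribute at most `1/2` by Kraft for `λ`, and the second halves
at most `L · 2^{-⌈log₂ L⌉} / 2 ≤ 1/2`.
-/

/-- The `t`-bit binary representation of `i` (as a list of `t` bits). -/
def binRep (t i : ℕ) : List Bool := List.ofFn (fun j : Fin t => i.testBit j)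

/-- The trimmed code `λ^tr`: keep `0 · λ(m_i)` when `|λ(m_i)| ≤ ⌈log₂ L⌉`,
otherwise replace it by `1 · bin_{⌈log₂ L⌉}(i)`. -/
def trimmed {L : ℕ} (lam : Fin L → List Bool) : Fin L → List Bool :=
  fun i =>
    if (lam i).length ≤ Nat.clog 2 L then false :: lam i
    else true :: binRep (Nat.clog 2 L) (i : ℕ)

lemma length_binRep (t i : ℕ) : (binRep t i).length = t := by
  simp [binRep]

lemma two_zpow_neg_length_cons (b : Bool) (w : List Bool) :
    (2 : ℝ) ^ (-((b :: w).length : ℤ)) = (2 : ℝ) ^ (-(w.length : ℤ)) / 2 := by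
  rw [List.length_cons, Nat.cast_succ, neg_add, zpow_add₀ two_ne_zero, zpow_neg_one, div_eq_mul_inv]

lemma two_zpow_neg_length_trimmed_le {L : ℕ} (lam : Fin L → List Bool) (i : Fin L) :
    (2 : ℝ) ^ (-((trimmed lam i).length : ℤ)) ≤
      ((2 : ℝ) ^ (-((lam i).length : ℤ)) + (2 : ℝ) ^ (-(Nat.clog 2 L : ℤ))) / 2 := by
  have hlam : (0 : ℝ) ≤ (2 : ℝ) ^ (-((lam i).length : ℤ)) := by positivity
  have hbin : (0 : ℝ) ≤ (2 : ℝ) ^ (-(Nat.clog 2 L : ℤ)) := by positivity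
  unfold trimmed
  split_ifs
  · rw [two_zpow_neg_length_cons]
    linarith
  · rw [two_zpow_neg_length_cons, length_binRep]
    linarith

lemma natCast_mul_two_zpow_neg_clog_le_one (L : ℕ) :
    (L : ℝ) * (2 : ℝ) ^ (-(Nat.clog 2 L : ℤ)) ≤ 1 := by
  have hL : (L : ℝ) ≤ 2 ^ Nat.clog 2 L := by
    exact_mod_cast Nat.le_pow_clog one_lt_two L
  rw [zpow_neg, zpow_natCast, ← div_eq_mul_inv]
  exact div_le_one_of_le₀ hL (by positivity)

theorem trimmed_kraft_general {L : ℕ}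
    (lam : Fin L → List Bool)
    (hkraft : ∑ i, (2 : ℝ) ^ (-((lam i).length : ℤ)) ≤ 1) :
    ∑ i, (2 : ℝ) ^ (-((trimmed lam i).length : ℤ)) ≤ 1 := by
  calc ∑ i, (2 : ℝ) ^ (-((trimmed lam i).length : ℤ))
      ≤ ∑ i, ((2 : ℝ) ^ (-((lam i).length : ℤ)) + (2 : ℝ) ^ (-(Nat.clog 2 L : ℤ))) / 2 :=
        sum_le_sum fun i _ => two_zpow_neg_length_trimmed_le lam i
    _ = ((∑ i, (2 : ℝ) ^ (-((lam i).length : ℤ))) +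
          (L : ℝ) * (2 : ℝ) ^ (-(Nat.clog 2 L : ℤ))) / 2 := by
        rw [← sum_div, sum_add_distrib, sum_const, card_univ, Fintype.card_fin, nsmul_eq_mul]
    _ ≤ 1 := by
        linarith [natCast_mul_two_zpow_neg_clog_le_one L]

/-- Kraft inequality for the trimmed code. -/
theorem trimmed_kraft {L : ℕ} (hL : 1 ≤ L)
    (lam : Fin L → List Bool) (hinj : Function.Injective lam)
    (hpf : ∀ i j : Fin L, i ≠ j → ¬ (lam i <+: lam j))
    (hkraft : ∑ i, (2 : ℝ) ^ (-((lam i).length : ℤ)) ≤ 1) :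
    ∑ i, (2 : ℝ) ^ (-((trimmed lam i).length : ℤ)) ≤ 1 :=
  trimmed_kraft_general lam hkraft
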